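/- arXiv:2511.04549 — 8 statements merged into one kernel-verified Lean document; each statement's English description precedes it below -/
import Mathlib

section
/- Let F = {x : Ax ≤ b, A_{(J)}x = b_J} be a nonempty face of P(A,b) = {x : Ax ≤ b}, where J = 𝒜(F) is the set of indices j such that (Ax)_j = b_j for all x ∈ F. If there exists μ with Aᵀμ = c, μ ≤ 0, and μ_j < 0 exactly for j ∈ J (and μ_j = 0 for j ∉ J), then F equals the set of optimal solutions of min{cᵀx : Ax ≤ b}. -/
open Matrix

/-- If a dual feasible `μ` has support exactly the active set `J` of a nonempty face `F`,
then `F` is the set of optimal solutions of the primal LP. -/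
theorem stmt_4 {m n : ℕ} (A : Matrix (Fin m) (Fin n) ℝ) (b : Fin m → ℝ) (c : Fin n → ℝ)
    (J : Set (Fin m)) (F : Set (Fin n → ℝ))
    (hF : F = {x | A.mulVec x ≤ b ∧ ∀ j ∈ J, A.mulVec x j = b j})
    (hFne : F.Nonempty)
    (hJ : J = {j | ∀ x ∈ F, A.mulVec x j = b j})
    (μ : Fin m → ℝ)
    (hμfeas : A.transpose.mulVec μ = c) (hμneg : μ ≤ 0)
    (hμsupp : ∀ j, μ j < 0 ↔ j ∈ J) :
    F = {x | A.mulVec x ≤ b ∧ ∀ x' : Fin n → ℝ, A.mulVec x' ≤ b → c ⬝ᵥ x ≤ c ⬝ᵥ x'} := by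
  have hzero : ∀ j, j ∉ J → μ j = 0 := by
    intro j hj
    rcases lt_or_eq_of_le (hμneg j) with h | h
    · exact absurd ((hμsupp j).mp h) hj
    · exact h
  have key : ∀ x, c ⬝ᵥ x = ∑ j, μ j * A.mulVec x j := by
    intro x
    rw [← hμfeas, Matrix.mulVec_transpose, ← Matrix.dotProduct_mulVec]
    rfl
  -- feasible x ⟹ μ⬝b ≤ c⬝x
  have h1 : ∀ x, A.mulVec x ≤ b → μ ⬝ᵥ b ≤ c ⬝ᵥ x := by
    intro x hx
    rw [key]
    apply Finset.sum_le_sum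
    intro j _
    exact mul_le_mul_of_nonpos_left (hx j) (hμneg j)
  -- x ∈ F ⟹ c⬝x = μ⬝b
  have h2 : ∀ x ∈ F, c ⬝ᵥ x = μ ⬝ᵥ b := by
    intro x hx
    rw [hF] at hx
    rw [key]
    apply Finset.sum_congr rfl
    intro j _
    by_cases hj : j ∈ J
    · rw [hx.2 j hj]
    · simp [hzero j hj]
  ext x
  constructor
  · intro hx
    have hxF := hx
    rw [hF] at hx
    refine ⟨hx.1, fun x' hx' => ?_⟩
    calc c ⬝ᵥ x = μ ⬝ᵥ b := h2 x hxF
    _ ≤ c ⬝ᵥ x' := h1 x' hx'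
  · rintro ⟨hfeas, hopt⟩
    obtain ⟨x₀, hx₀⟩ := hFne
    have hx₀feas : A.mulVec x₀ ≤ b := by rw [hF] at hx₀; exact hx₀.1
    have heq : c ⬝ᵥ x = μ ⬝ᵥ b :=
      le_antisymm ((hopt x₀ hx₀feas).trans_eq (h2 x₀ hx₀)) (h1 x hfeas)
    -- each term μ j * (Ax j - b j) ≥ 0 and sum = 0 ⟹ each = 0
    have hsum : ∑ j, (μ j * A.mulVec x j - μ j * b j) = 0 := by
      rw [Finset.sum_sub_distrib, ← key, heq]
      simp [dotProduct]
    have hterm : ∀ j ∈ Finset.univ, (0:ℝ) ≤ μ j * A.mulVec x j - μ j * b j := by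
      intro j _
      have := mul_le_mul_of_nonpos_left (hfeas j) (hμneg j)
      linarith
    have hall := (Finset.sum_eq_zero_iff_of_nonneg hterm).mp hsum
    rw [hF]
    refine ⟨hfeas, fun j hj => ?_⟩
    have hμj := (hμsupp j).mpr hj
    have := hall j (Finset.mem_univ j)
    have : μ j * (A.mulVec x j - b j) = 0 := by linarith [this]; 
    rcases mul_eq_zero.mp this with h | h
    · exact absurd h (ne_of_lt hμj)
    · linarith
end

section
/- Let F be a nonempty face of P(A,b) that equals the set of optimal solutions of min{cᵀx : Ax ≤ b}. Assuming the Goldman–Tucker strict complementarity theorem (existence of a primal-dual optimal pair (x, μ) with (Ax)_j = b_j ⇔ μ_j ≠ 0 for all j), there exists a dual feasible μ (Aᵀμ = c, μ ≤ 0) with μ_j = 0 if and only if j ∉ 𝒜(F). -/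
open Matrix

/-- If the nonempty face `F` is exactly the optimal set of the primal LP, then (assuming
the Goldman–Tucker strict complementarity theorem) there is a dual feasible `μ` whose
support is exactly the active set of `F`. -/
theorem stmt_5 {m n : ℕ} (A : Matrix (Fin m) (Fin n) ℝ) (b : Fin m → ℝ) (c : Fin n → ℝ)
    (F : Set (Fin n → ℝ)) (J : Set (Fin m))
    (hJ : J = {j | ∀ x ∈ F, A.mulVec x j = b j})
    (hFface : F = {x | A.mulVec x ≤ b ∧ ∀ j ∈ J, A.mulVec x j = b j})
    (hFne : F.Nonempty)
    (hFopt : F = {x | A.mulVec x ≤ b ∧ ∀ x' : Fin n → ℝ, A.mulVec x' ≤ b → c ⬝ᵥ x ≤ c ⬝ᵥ x'})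
    (hGT : ∃ x : Fin n → ℝ, ∃ μ : Fin m → ℝ,
      A.mulVec x ≤ b ∧ (∀ x' : Fin n → ℝ, A.mulVec x' ≤ b → c ⬝ᵥ x ≤ c ⬝ᵥ x') ∧
      A.transpose.mulVec μ = c ∧ μ ≤ 0 ∧
      (∀ μ' : Fin m → ℝ, A.transpose.mulVec μ' = c → μ' ≤ 0 → b ⬝ᵥ μ' ≤ b ⬝ᵥ μ) ∧
      (∀ j, A.mulVec x j = b j ↔ μ j < 0)) :
    ∃ μ : Fin m → ℝ, A.transpose.mulVec μ = c ∧ μ ≤ 0 ∧ ∀ j, μ j = 0 ↔ j ∉ J := by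
  obtain ⟨x, μ, hxfeas, hxopt, hdual, hμle, _, hcs⟩ := hGT
  have hxF : x ∈ F := by rw [hFopt]; exact ⟨hxfeas, hxopt⟩
  refine ⟨μ, hdual, hμle, fun j => ?_⟩
  constructor
  · -- μ j = 0 → j ∉ J
    intro hμ0 hjJ
    have : A.mulVec x j = b j := by
      rw [hJ] at hjJ; exact hjJ x hxF
    have := (hcs j).mp this
    rw [hμ0] at this; exact lt_irrefl 0 this
  · -- j ∉ J → μ j = 0
    intro hjJ
    rw [hJ] at hjJ
    simp only [Set.mem_setOf_eq] at hjJ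
    push_neg at hjJ
    obtain ⟨y, hyF, hyj⟩ := hjJ
    have hyfeas : A.mulVec y ≤ b := by rw [hFopt] at hyF; exact hyF.1
    have hyopt : ∀ x' : Fin n → ℝ, A.mulVec x' ≤ b → c ⬝ᵥ y ≤ c ⬝ᵥ x' := by
      rw [hFopt] at hyF; exact hyF.2
    -- c⬝y = c⬝x
    have hcyx : c ⬝ᵥ y = c ⬝ᵥ x := le_antisymm (hyopt x hxfeas) (hxopt y hyfeas)
    have key : ∀ v : Fin n → ℝ, c ⬝ᵥ v = ∑ i, μ i * A.mulVec v i := by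
      intro v
      rw [← hdual]
      simp only [Matrix.mulVec, dotProduct, Matrix.transpose_apply, Finset.sum_mul,
        Finset.mul_sum]
      rw [Finset.sum_comm]
      exact Finset.sum_congr rfl fun i _ => Finset.sum_congr rfl fun k _ => by ring
    have hμb : μ ⬝ᵥ b = ∑ i, μ i * b i := rfl
    -- strong duality via strict complementarity
    have hcx : c ⬝ᵥ x = μ ⬝ᵥ b := by
      rw [key x, hμb]
      apply Finset.sum_congr rfl
      intro i _
      by_cases h : μ i = 0
      · simp [h]
      · have : A.mulVec x i = b i := by
          by_contra hne
          exact h (le_antisymm (hμle i) (not_lt.mp (fun hlt => hne ((hcs i).mpr hlt))))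
        rw [this]
    have hsum : ∑ i, μ i * (b i - A.mulVec y i) = 0 := by
      have h1 : ∑ i, μ i * (b i - A.mulVec y i)
          = (∑ i, μ i * b i) - ∑ i, μ i * A.mulVec y i := by
        rw [← Finset.sum_sub_distrib]
        exact Finset.sum_congr rfl fun i _ => by ring
      rw [h1, ← hμb, ← key y, hcyx, hcx, sub_self]
    have hterm : ∀ i ∈ Finset.univ, μ i * (b i - A.mulVec y i) ≤ 0 := by
      intro i _
      exact mul_nonpos_of_nonpos_of_nonneg (hμle i) (sub_nonneg.mpr (hyfeas i))
    have hall := (Finset.sum_eq_zero_iff_of_nonpos hterm).mp hsum j (Finset.mem_univ j)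
    have hpos : 0 < b j - A.mulVec y j := sub_pos.mpr (lt_of_le_of_ne (hyfeas j) hyj)
    exact (mul_eq_zero.mp hall).resolve_right (ne_of_gt hpos)
end

section
/- Let x* be feasible for min{cᵀx : Ax ≤ b}, let 𝒜 = {j : (Ax*)_j = b_j}, and suppose rank A_{(𝒜)} = n (so x* is a vertex). If there exists μ with Aᵀμ = c, μ ≤ 0, μ_j < 0 for all j ∈ 𝒜, and μ_j = 0 for all j ∉ 𝒜, then x* is the unique optimal solution of the LP. -/
open Matrix

/-- Strict complementary slackness at a vertex implies unique optimality. -/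
theorem stmt_6 {m n : ℕ} (A : Matrix (Fin m) (Fin n) ℝ) (b : Fin m → ℝ) (c : Fin n → ℝ)
    (xstar : Fin n → ℝ) (𝒜 : Set (Fin m))
    (hfeas : A.mulVec xstar ≤ b)
    (h𝒜 : 𝒜 = {j | A.mulVec xstar j = b j})
    (hvertex : Submodule.span ℝ {v : Fin n → ℝ | ∃ j ∈ 𝒜, v = A j} = ⊤)
    (μ : Fin m → ℝ)
    (hμfeas : A.transpose.mulVec μ = c) (hμneg : μ ≤ 0)
    (hμactive : ∀ j ∈ 𝒜, μ j < 0) (hμinactive : ∀ j ∉ 𝒜, μ j = 0) :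
    ∀ x : Fin n → ℝ, A.mulVec x ≤ b → x ≠ xstar → c ⬝ᵥ xstar < c ⬝ᵥ x := by
  intro x hx hne
  have hact : ∀ j ∈ 𝒜, A.mulVec xstar j = b j := by
    intro j hj; rw [h𝒜] at hj; exact hj
  set d : Fin n → ℝ := x - xstar with hd
  have hdne : d ≠ 0 := by
    intro h
    apply hne
    have := sub_eq_zero.mp h
    exact this
  -- key: some active constraint is strict at x
  have hkey : ∃ j ∈ 𝒜, A.mulVec x j < b j := by
    by_contra h
    push_neg at h
    have heq : ∀ j ∈ 𝒜, A j ⬝ᵥ d = 0 := by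
      intro j hj
      have h1 : A.mulVec x j = b j := le_antisymm (hx j) (h j hj)
      have h2 := hact j hj
      have : A j ⬝ᵥ x - A j ⬝ᵥ xstar = 0 := by
        have hx' : A j ⬝ᵥ x = b j := h1
        have hx2 : A j ⬝ᵥ xstar = b j := h2
        rw [hx', hx2, sub_self]
      rw [hd]
      simpa [dotProduct_sub] using this
    have hall : ∀ v ∈ Submodule.span ℝ {v : Fin n → ℝ | ∃ j ∈ 𝒜, v = A j},
        v ⬝ᵥ d = 0 := by
      intro v hv
      induction hv using Submodule.span_induction with
      | mem v hv => obtain ⟨j, hj, rfl⟩ := hv; exact heq j hj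
      | zero => simp
      | add u w _ _ hu hw => simp [add_dotProduct, hu, hw]
      | smul a u _ hu => simp [smul_dotProduct, hu]
    have hdd : d ⬝ᵥ d = 0 := hall d (by rw [hvertex]; exact Submodule.mem_top)
    exact hdne (dotProduct_self_eq_zero.mp hdd)
  obtain ⟨j0, hj0, hj0lt⟩ := hkey
  -- c ⬝ x - c ⬝ xstar = Σ μ j * (Ax j - Ax* j)
  have hc : ∀ y : Fin n → ℝ, c ⬝ᵥ y = μ ⬝ᵥ A.mulVec y := by
    intro y
    rw [← hμfeas, Matrix.mulVec_transpose, ← Matrix.dotProduct_mulVec]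
  have hdiff : c ⬝ᵥ x - c ⬝ᵥ xstar =
      ∑ j, μ j * (A.mulVec x j - A.mulVec xstar j) := by
    rw [hc x, hc xstar]
    simp [dotProduct, mul_sub, Finset.sum_sub_distrib]
  have hpos : 0 < ∑ j, μ j * (A.mulVec x j - A.mulVec xstar j) := by
    apply Finset.sum_pos'
    · intro j _
      by_cases hj : j ∈ 𝒜
      · have h1 : μ j ≤ 0 := hμneg j
        have h2 : A.mulVec x j - A.mulVec xstar j ≤ 0 := by
          rw [hact j hj]; exact sub_nonpos.mpr (hx j)
        nlinarith
      · simp [hμinactive j hj]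
    · exact ⟨j0, Finset.mem_univ j0, mul_pos_of_neg_of_neg (hμactive j0 hj0)
        (by rw [hact j0 hj0]; exact sub_neg.mpr hj0lt)⟩
  linarith [hdiff ▸ hpos]
end

section
/- Let A ∈ ℝ^{m×n} have rank m, let ℬ ⊆ [n] be a basis (A_{[ℬ]} invertible) with non-basis 𝒩 = [n] \ ℬ, and suppose y is feasible for min{cᵀy : Ay = b, y ≥ 0} with y_i = 0 for all i ∈ 𝒩. Suppose there exist μ ∈ ℝ^m and s⁽¹⁾ ∈ ℝ₊^{ℬ'}, s⁽²⁾ ∈ ℝ^{𝒩} with s⁽²⁾ > 0 componentwise, such that c = Aᵀμ + Σ_{i∈ℬ'} s⁽¹⁾_i e_i + Σ_{i∈𝒩} s⁽²⁾_i e_i, where ℬ' ⊆ ℬ is a set of indices whose coordinates are equal across all feasible solutions (i.e., for any two feasible y, y', y_i = y'_i for i ∈ ℬ'). Then y is the unique optimal solution of the LP. -/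
open Matrix

/-- Unique optimality of a basic solution from a strict complementarity-type decomposition
of the objective (key step of Theorem on InvLFP-B, pessimistic scenario). -/
theorem stmt_9 {m n : ℕ} (A : Matrix (Fin m) (Fin n) ℝ) (b : Fin m → ℝ) (c : Fin n → ℝ)
    (hrank : A.rank = m)
    (ℬ : Finset (Fin n)) (hcard : ℬ.card = m)
    (hbasis : LinearIndependent ℝ (fun i : {i // i ∈ ℬ} => fun r => A r i.1))
    (y : Fin n → ℝ) (hfeas : A.mulVec y = b) (hpos : 0 ≤ y)
    (hyN : ∀ i ∉ ℬ, y i = 0)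
    (ℬ' : Finset (Fin n)) (hsub : ℬ' ⊆ ℬ)
    (hconst : ∀ y' y'' : Fin n → ℝ, A.mulVec y' = b → 0 ≤ y' → A.mulVec y'' = b → 0 ≤ y'' →
      ∀ i ∈ ℬ', y' i = y'' i)
    (μ : Fin m → ℝ) (s₁ s₂ : Fin n → ℝ)
    (hs₁pos : ∀ i ∈ ℬ', 0 ≤ s₁ i) (hs₁supp : ∀ i ∉ ℬ', s₁ i = 0)
    (hs₂pos : ∀ i ∉ ℬ, 0 < s₂ i) (hs₂supp : ∀ i ∈ ℬ, s₂ i = 0)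
    (hdecomp : c = A.transpose.mulVec μ + s₁ + s₂) :
    ∀ y' : Fin n → ℝ, A.mulVec y' = b → 0 ≤ y' → y' ≠ y → c ⬝ᵥ y < c ⬝ᵥ y' := by
  intro y' hfeas' hpos' hne
  -- uniqueness among basic solutions
  have huniq : ¬ (∀ i ∉ ℬ, y' i = 0) := by
    intro hNz
    apply hne
    have hker : ∀ r, ∑ i ∈ ℬ, (y' i - y i) * A r i = 0 := by
      intro r
      have h1 : ∑ i ∈ ℬ, (y' i - y i) * A r i = ∑ i, (y' i - y i) * A r i := by
        refine Finset.sum_subset (Finset.subset_univ _) ?_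
        intro i _ hi
        rw [hNz i hi, hyN i hi]
        ring
      have h2 : ∑ i, (y' i - y i) * A r i = A.mulVec y' r - A.mulVec y r := by
        simp only [Matrix.mulVec, dotProduct, ← Finset.sum_sub_distrib]
        exact Finset.sum_congr rfl (fun i _ => by ring)
      rw [h1, h2, hfeas, hfeas']
      ring
    have := (Fintype.linearIndependent_iff.mp hbasis) (fun i => y' i.1 - y i.1) ?_
    · funext i
      by_cases hi : i ∈ ℬ
      · have := this ⟨i, hi⟩
        linarith [sub_eq_zero.mp (by linarith [this] : y' i - y i = 0)]
      · rw [hNz i hi, hyN i hi]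
    · funext r
      have : (∑ i : {i // i ∈ ℬ}, (y' i.1 - y i.1) • fun r => A r i.1) r
          = ∑ i : {i // i ∈ ℬ}, (y' i.1 - y i.1) * A r i.1 := by
        simp
      rw [this, Finset.univ_eq_attach, Finset.sum_attach ℬ (fun i => (y' i - y i) * A r i)]
      simpa using hker r
  -- difference in objective
  have hs₁eq : s₁ ⬝ᵥ y' = s₁ ⬝ᵥ y := by
    unfold dotProduct
    apply Finset.sum_congr rfl
    intro i _
    by_cases hi : i ∈ ℬ'
    · rw [hconst y' y hfeas' hpos' hfeas hpos i hi]
    · rw [hs₁supp i hi]; ring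
  have hs₂y : s₂ ⬝ᵥ y = 0 := by
    unfold dotProduct
    apply Finset.sum_eq_zero
    intro i _
    by_cases hi : i ∈ ℬ
    · rw [hs₂supp i hi]; ring
    · rw [hyN i hi]; ring
  have hs₂y' : 0 < s₂ ⬝ᵥ y' := by
    unfold dotProduct
    push_neg at huniq
    obtain ⟨j, hjB, hjne⟩ := huniq
    apply Finset.sum_pos' ?_ ⟨j, Finset.mem_univ j, ?_⟩
    · intro i _
      by_cases hi : i ∈ ℬ
      · rw [hs₂supp i hi]; simp
      · exact mul_nonneg (hs₂pos i hi).le (hpos' i)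
    · exact mul_pos (hs₂pos j hjB) (lt_of_le_of_ne (hpos' j) (Ne.symm hjne))
  have hμ : ∀ z : Fin n → ℝ, A.mulVec z = b →
      (A.transpose.mulVec μ) ⬝ᵥ z = μ ⬝ᵥ b := by
    intro z hz
    rw [Matrix.mulVec_transpose, ← Matrix.dotProduct_mulVec, hz]
  have hcy' : c ⬝ᵥ y' = μ ⬝ᵥ b + s₁ ⬝ᵥ y' + s₂ ⬝ᵥ y' := by
    rw [hdecomp, add_dotProduct, add_dotProduct, hμ y' hfeas']
  have hcy : c ⬝ᵥ y = μ ⬝ᵥ b + s₁ ⬝ᵥ y + s₂ ⬝ᵥ y := by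
    rw [hdecomp, add_dotProduct, add_dotProduct, hμ y hfeas]
  rw [hcy, hcy', hs₁eq, hs₂y]
  linarith
end

section
/- Let A ∈ ℝ^{m×n} with rank A = m, and let i ∈ [n] be an index contained in some basis ℬ of A such that (ℬ \ {i}) ∪ {j} is not a basis for any j ∉ ℬ. Then i is contained in every basis of A, and moreover rank A_{[[n]\{i}]} = m − 1. -/
open Matrix

/-- A set `S` of column indices is a basis of `A` if it has `m` elements and the
corresponding columns are linearly independent (i.e. the column submatrix is regular). -/
def IsBasisOf {m n : ℕ} (A : Matrix (Fin m) (Fin n) ℝ) (S : Finset (Fin n)) : Prop :=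
  S.card = m ∧ LinearIndependent ℝ (fun i : {i // i ∈ S} => fun r => A r i.1)

/-!
Let `W` be the span of the columns indexed by `ℬ \ {i}`, a space of dimension `m - 1`. A column
`j ∉ ℬ` outside `W` could replace `i` in `ℬ`, so by hypothesis every column other than `i` lies
in `W`. Hence `W` is the column space of `A` with column `i` deleted, and a set of independent
columns avoiding `i` has at most `m - 1 < m` elements.
-/

open Module Submodule Finset

section Exchange

variable {K V ι : Type*} [DivisionRing K] [AddCommGroup V] [Module K V] {v : ι → V}
  {s : Finset ι}

theorem LinearIndepOn.finrank_span_image_eq_card (hs : LinearIndepOn K v ↑s) :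
    finrank K (span K (v '' ↑s)) = s.card := by
  rw [Set.image_eq_range, finrank_span_eq_card hs]
  simp

variable [DecidableEq ι] {i : ι}

theorem LinearIndepOn.apply_mem_span_erase_of_forall_not_linearIndepOn_exchange
    (hs : LinearIndepOn K v ↑s) (hno : ∀ j ∉ s, ¬ LinearIndepOn K v ↑(insert j (s.erase i)))
    {j : ι} (hji : j ≠ i) : v j ∈ span K (v '' ↑(s.erase i)) := by
  by_cases hjs : j ∈ s
  · exact subset_span ⟨j, mem_erase.2 ⟨hji, hjs⟩, rfl⟩
  by_contra hjW
  apply hno j hjs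
  rw [coe_insert]
  exact (linearIndepOn_insert fun h => hjs (mem_of_mem_erase h)).2
    ⟨hs.mono (coe_subset.2 (erase_subset i s)), hjW⟩

theorem LinearIndepOn.span_image_ne_eq_span_erase_of_forall_not_linearIndepOn_exchange
    (hs : LinearIndepOn K v ↑s) (hno : ∀ j ∉ s, ¬ LinearIndepOn K v ↑(insert j (s.erase i))) :
    span K (v '' {j | j ≠ i}) = span K (v '' ↑(s.erase i)) := by
  refine le_antisymm (span_le.2 ?_) (span_mono (Set.image_mono fun j hj => (mem_erase.1 hj).1))
  rintro _ ⟨j, hji, rfl⟩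
  exact hs.apply_mem_span_erase_of_forall_not_linearIndepOn_exchange hno hji

theorem LinearIndepOn.finrank_span_image_ne_of_forall_not_linearIndepOn_exchange
    (hs : LinearIndepOn K v ↑s) (hi : i ∈ s)
    (hno : ∀ j ∉ s, ¬ LinearIndepOn K v ↑(insert j (s.erase i))) :
    finrank K (span K (v '' {j | j ≠ i})) = s.card - 1 := by
  rw [hs.span_image_ne_eq_span_erase_of_forall_not_linearIndepOn_exchange hno,
    (hs.mono (coe_subset.2 (erase_subset i s))).finrank_span_image_eq_card, card_erase_of_mem hi]

theorem LinearIndepOn.mem_of_forall_not_linearIndepOn_exchange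
    (hs : LinearIndepOn K v ↑s) (hi : i ∈ s)
    (hno : ∀ j ∉ s, ¬ LinearIndepOn K v ↑(insert j (s.erase i)))
    {t : Finset ι} (ht : LinearIndepOn K v ↑t) (hcard : t.card = s.card) : i ∈ t := by
  by_contra hit
  have : FiniteDimensional K (span K (v '' {j | j ≠ i})) := by
    rw [hs.span_image_ne_eq_span_erase_of_forall_not_linearIndepOn_exchange hno]
    exact FiniteDimensional.span_of_finite K ((s.erase i).finite_toSet.image v)
  have hle := Submodule.finrank_mono
    (span_mono (Set.image_mono fun j (hj : j ∈ t) => ne_of_mem_of_not_mem hj hit) :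
      span K (v '' ↑t) ≤ span K (v '' {j | j ≠ i}))
  rw [ht.finrank_span_image_eq_card,
    hs.finrank_span_image_ne_of_forall_not_linearIndepOn_exchange hi hno, hcard] at hle
  have := card_pos.2 ⟨i, hi⟩
  omega

end Exchange

theorem Matrix.rank_submatrix_id_eq_finrank_span_image {m n k R : Type*} [Fintype n] [Fintype k]
    [CommRing R] (A : Matrix m n R) (c : k → n) :
    (A.submatrix id c).rank = finrank R (span R (A.col '' Set.range c)) := by
  rw [rank_eq_finrank_span_cols, ← Set.range_comp]
  rfl

theorem stmt_12_general {m n : ℕ} (A : Matrix (Fin m) (Fin n) ℝ)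
    (ℬ : Finset (Fin n)) (hℬ : IsBasisOf A ℬ) (i : Fin n) (hi : i ∈ ℬ)
    (hnoswap : ¬ ∃ j ∉ ℬ, IsBasisOf A (insert j (ℬ.erase i))) :
    (∀ S : Finset (Fin n), IsBasisOf A S → i ∈ S) ∧
      (A.submatrix id (fun j : {j : Fin n // j ≠ i} => j.1)).rank = m - 1 := by
  obtain ⟨hcard, hli⟩ := hℬ
  have hli : LinearIndepOn ℝ A.col ↑ℬ := hli
  have hno : ∀ j ∉ ℬ, ¬ LinearIndepOn ℝ A.col ↑(insert j (ℬ.erase i)) := by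
    refine fun j hj hind => hnoswap ⟨j, hj, ?_, hind⟩
    have := card_pos.2 ⟨i, hi⟩
    rw [card_insert_of_notMem fun h => hj (mem_of_mem_erase h), card_erase_of_mem hi]
    omega
  refine ⟨fun S hS => hli.mem_of_forall_not_linearIndepOn_exchange hi hno hS.2
    (hS.1.trans hcard.symm), ?_⟩
  rw [rank_submatrix_id_eq_finrank_span_image, Subtype.range_coe_subtype,
    hli.finrank_span_image_ne_of_forall_not_linearIndepOn_exchange hi hno, hcard]

/-- If `i` lies in a basis `ℬ` of `A` and no exchange of `i` for some `j ∉ ℬ` yields a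
basis, then `i` belongs to every basis of `A` and deleting column `i` drops the rank
to `m − 1`. -/
theorem stmt_12 {m n : ℕ} (A : Matrix (Fin m) (Fin n) ℝ) (hrank : A.rank = m)
    (ℬ : Finset (Fin n)) (hℬ : IsBasisOf A ℬ) (i : Fin n) (hi : i ∈ ℬ)
    (hnoswap : ¬ ∃ j ∉ ℬ, IsBasisOf A (insert j (ℬ.erase i))) :
    (∀ S : Finset (Fin n), IsBasisOf A S → i ∈ S) ∧
      (A.submatrix id (fun j : {j : Fin n // j ≠ i} => j.1)).rank = m - 1 :=
  stmt_12_general A ℬ hℬ i hi hnoswap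
end

section
/- Reduction soundness for 3-SAT (optimistic, single target): Let a 3-SAT instance with variables ξ₁,…,ξ_n and clauses γ₁,…,γ_m be given. For x ∈ [0,1]^n, consider the LP: minimize −Σ y_i − z subject to y_i ≤ x_i, y_i ≤ 1 − x_i for all i, z ≤ c_{j1}+c_{j2}+c_{j3} for all j, z ≤ 1, y ≥ 0, z ≥ 0, where c_{jk} = x_i if the k-th literal of clause γ_j is ξ_i and c_{jk} = 1 − x_i if it is ¬ξ_i. Then the 3-SAT instance is satisfiable if and only if there exists x ∈ [0,1]^n such that (y, z) = (0, 1) is an optimal solution of this LP. -/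
open Finset

/-- The value of a literal `(i, s)` (variable `ξ_i`, positive iff `s`) under the
relaxed assignment `x`: `x i` for a positive literal and `1 - x i` for a negated one. -/
noncomputable def litVal {n : ℕ} (x : Fin n → ℝ) (l : Fin n × Bool) : ℝ :=
  if l.2 then x l.1 else 1 - x l.1

/-- Soundness of the 3-SAT reduction for the optimistic singleton inverse feasibility
problem: the 3-SAT instance `γ` (with `m` clauses of three literals over `n` variables)
is satisfiable iff some parameter `x ∈ [0,1]^n` makes `(y, z) = (0, 1)` optimal for the
LP `min −Σᵢ yᵢ − z  s.t.  yᵢ ≤ xᵢ, yᵢ ≤ 1−xᵢ, z ≤ c_{j1}+c_{j2}+c_{j3}, z ≤ 1, y ≥ 0, z ≥ 0`. -/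
theorem stmt_13 {n m : ℕ} (γ : Fin m → Fin 3 → Fin n × Bool) :
    (∃ T : Fin n → Bool, ∀ j : Fin m, ∃ k : Fin 3, T (γ j k).1 = (γ j k).2) ↔
    (∃ x : Fin n → ℝ, (∀ i, x i ∈ Set.Icc (0:ℝ) 1) ∧
      ((∀ i, 0 ≤ (0:ℝ) ∧ (0:ℝ) ≤ x i ∧ (0:ℝ) ≤ 1 - x i) ∧ (0:ℝ) ≤ 1 ∧ (1:ℝ) ≤ 1 ∧
        (∀ j : Fin m, (1:ℝ) ≤ ∑ k : Fin 3, litVal x (γ j k))) ∧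
      (∀ (y : Fin n → ℝ) (z : ℝ),
        (∀ i, 0 ≤ y i ∧ y i ≤ x i ∧ y i ≤ 1 - x i) → 0 ≤ z → z ≤ 1 →
        (∀ j : Fin m, z ≤ ∑ k : Fin 3, litVal x (γ j k)) →
        -(∑ _i : Fin n, (0:ℝ)) - 1 ≤ -(∑ i, y i) - z)) := by
  constructor
  · rintro ⟨T, hT⟩
    refine ⟨fun i => if T i then 1 else 0, ?_, ⟨?_, by norm_num, le_refl 1, ?_⟩, ?_⟩
    · intro i; by_cases h : T i <;> simp [h]
    · intro i; by_cases h : T i <;> simp [h]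
    · intro j
      obtain ⟨k, hk⟩ := hT j
      have hterm : litVal (fun i => if T i then (1:ℝ) else 0) (γ j k) = 1 := by
        unfold litVal
        cases hs : (γ j k).2 <;> simp [hs] at hk ⊢ <;> simp [hk]
      calc (1:ℝ) = litVal (fun i => if T i then (1:ℝ) else 0) (γ j k) := hterm.symm
        _ ≤ ∑ k : Fin 3, litVal (fun i => if T i then (1:ℝ) else 0) (γ j k) := by
            apply Finset.single_le_sum (fun k _ => ?_) (Finset.mem_univ k)
            unfold litVal
            by_cases hs : (γ j k).2 <;> by_cases h : T (γ j k).1 <;> simp [hs, h]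
    · intro y z hy hz0 hz1 _
      have hy0 : ∀ i, y i = 0 := by
        intro i
        have h := hy i
        by_cases h1 : T i
        · have : y i ≤ 1 - (if T i then (1:ℝ) else 0) := h.2.2
          simp [h1] at this
          linarith [h.1]
        · have : y i ≤ (if T i then (1:ℝ) else 0) := h.2.1
          simp [h1] at this
          linarith [h.1]
      have : ∑ i, y i = 0 := Finset.sum_eq_zero fun i _ => hy0 i
      simp [this]
      linarith
  · rintro ⟨x, hx, ⟨hfeas1, _, _, hfeas2⟩, hopt⟩
    have hybin : ∀ i, x i = 0 ∨ x i = 1 := by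
      set y : Fin n → ℝ := fun i => min (x i) (1 - x i) with hy
      have hyfeas : ∀ i, 0 ≤ y i ∧ y i ≤ x i ∧ y i ≤ 1 - x i := by
        intro i
        obtain ⟨h0, h1⟩ := hx i
        exact ⟨le_min h0 (by linarith), min_le_left _ _, min_le_right _ _⟩
      have h := hopt y 1 hyfeas zero_le_one le_rfl hfeas2
      simp at h
      have hsum : ∑ i, y i ≤ 0 := by linarith
      have hz : ∀ i ∈ Finset.univ, y i = 0 := by
        rw [← Finset.sum_eq_zero_iff_of_nonneg (fun i _ => (hyfeas i).1)]
        exact le_antisymm hsum (Finset.sum_nonneg fun i _ => (hyfeas i).1)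
      intro i
      have := hz i (Finset.mem_univ i)
      rcases min_eq_iff.mp (hy ▸ this) with h | h
      · exact Or.inl h.1
      · right; linarith [h.1]
    refine ⟨fun i => decide (x i = 1), fun j => ?_⟩
    by_contra hc
    push_neg at hc
    have hall : ∀ k : Fin 3, litVal x (γ j k) = 0 := by
      intro k
      have hck := hc k
      unfold litVal
      cases hs : (γ j k).2 <;> simp [hs] at hck ⊢
      · -- sign false: T i ≠ false means x i = 1
        simp [hck]
      · -- sign true: x i ≠ 1, so x i = 0
        rcases hybin (γ j k).1 with h | h
        · exact h
        · exact absurd h hck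
    have := hfeas2 j
    rw [Finset.sum_eq_zero fun k _ => hall k] at this
    linarith
end

section
/- Reduction soundness for the objective-parametrized case: Let a 3-SAT instance with n variables and m clauses be given, and let X := {x ∈ [0,1]^n : c_{j1}+c_{j2}+c_{j3} ≥ 1 for all j ∈ [m]}, where c_{jk} = x_i or 1 − x_i according to the k-th literal of clause j. Suppose there exists x ∈ X and an optimal solution (μ, ν, z) with z = 0 of the LP: minimize −xᵀμ − (1−x)ᵀν − (n − 1/4)z subject to μ_i + ν_i + z ≤ 1 for all i, μ, ν, z ≥ 0. Then for every i ∈ [n], max(x_i, 1 − x_i) ≥ 3/4, and the truth assignment T(ξ_i) = 1 if x_i ≥ 3/4 and T(ξ_i) = 0 if x_i ≤ 1/4 is well-defined and satisfies the 3-SAT instance. -/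
open Finset

/-- Soundness of the objective-parametrized 3-SAT reduction: if for some `x ∈ X` an
optimal solution `(μ, ν, z)` of the LP
`min −xᵀμ − (1−x)ᵀν − (n − 1/4)z  s.t.  μᵢ + νᵢ + z ≤ 1, μ, ν, z ≥ 0` has `z = 0`, then
every `x_i` is within `1/4` of a Boolean value, and the rounded assignment
`T(ξ_i) = 1 iff x_i ≥ 3/4` satisfies the 3-SAT instance. -/
theorem stmt_15 {n m : ℕ} (γ : Fin m → Fin 3 → Fin n × Bool)
    (x : Fin n → ℝ) (hx : ∀ i, x i ∈ Set.Icc (0:ℝ) 1)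
    (hX : ∀ j : Fin m, 1 ≤ ∑ k : Fin 3, litVal x (γ j k))
    (μ ν : Fin n → ℝ)
    (hfeas : (∀ i, μ i + ν i + 0 ≤ 1) ∧ (∀ i, 0 ≤ μ i) ∧ (∀ i, 0 ≤ ν i) ∧ (0:ℝ) ≤ 0)
    (hopt : ∀ (μ' ν' : Fin n → ℝ) (z' : ℝ),
      (∀ i, μ' i + ν' i + z' ≤ 1) → (∀ i, 0 ≤ μ' i) → (∀ i, 0 ≤ ν' i) → 0 ≤ z' →
      -(∑ i, x i * μ i) - (∑ i, (1 - x i) * ν i) - ((n : ℝ) - 1/4) * 0 ≤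
        -(∑ i, x i * μ' i) - (∑ i, (1 - x i) * ν' i) - ((n : ℝ) - 1/4) * z') :
    (∀ i, (3:ℝ)/4 ≤ max (x i) (1 - x i)) ∧
    (∀ j : Fin m, ∃ k : Fin 3,
      if (γ j k).2 then (3:ℝ)/4 ≤ x (γ j k).1 else x (γ j k).1 ≤ 1/4) := by
  obtain ⟨hf, hμ, hν, -⟩ := hfeas
  have key : (n:ℝ) - 1/4 ≤ ∑ i, (x i * μ i + (1 - x i) * ν i) := by
    have h := hopt (fun _ => 0) (fun _ => 0) 1 (fun i => by norm_num)
      (fun i => le_refl 0) (fun i => le_refl 0) zero_le_one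
    simp at h
    rw [Finset.sum_add_distrib]
    linarith
  have hM : ∀ i, x i * μ i + (1 - x i) * ν i ≤ max (x i) (1 - x i) := by
    intro i
    have h1 := (hx i).1; have h2 := (hx i).2
    have hm1 : x i ≤ max (x i) (1 - x i) := le_max_left _ _
    have hm2 : 1 - x i ≤ max (x i) (1 - x i) := le_max_right _ _
    have hμν : μ i + ν i ≤ 1 := by have := hf i; linarith
    nlinarith [hμ i, hν i]
  have hsum : (n:ℝ) - 1/4 ≤ ∑ i, max (x i) (1 - x i) :=
    key.trans (Finset.sum_le_sum fun i _ => hM i)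
  have hpart1 : ∀ i, (3:ℝ)/4 ≤ max (x i) (1 - x i) := by
    intro i
    have hle1 : ∀ j, max (x j) (1 - x j) ≤ 1 := fun j =>
      max_le (hx j).2 (by linarith [(hx j).1])
    have hsplit : ∑ j, max (x j) (1 - x j)
        = max (x i) (1 - x i) + ∑ j ∈ univ.erase i, max (x j) (1 - x j) :=
      (Finset.add_sum_erase _ _ (mem_univ i)).symm
    have hrest : ∑ j ∈ univ.erase i, max (x j) (1 - x j) ≤ (n - 1 : ℝ) := by
      have hn : 1 ≤ n := i.pos
      calc ∑ j ∈ univ.erase i, max (x j) (1 - x j) ≤ ∑ _j ∈ univ.erase i, (1:ℝ) :=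
          Finset.sum_le_sum fun j _ => hle1 j
        _ = (n - 1 : ℝ) := by
          rw [Finset.sum_const, Finset.card_erase_of_mem (mem_univ i),
            Finset.card_univ, Fintype.card_fin, nsmul_eq_mul, mul_one]
          push_cast [hn]
          ring
    linarith [hsum]
  refine ⟨hpart1, ?_⟩
  intro j
  by_contra hcon
  push_neg at hcon
  have hlit : ∀ k, litVal x (γ j k) ≤ 1/4 := by
    intro k
    have h := hcon k
    have hd := hpart1 (γ j k).1
    rw [le_max_iff] at hd
    cases hb : (γ j k).2 with
    | true =>
        rw [if_pos hb] at h
        simp only [litVal, hb, if_true]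
        rcases hd with h' | h'
        · exact absurd h' h
        · linarith
    | false =>
        rw [if_neg (by rw [hb]; exact Bool.false_ne_true)] at h
        simp only [litVal, hb, Bool.false_eq_true, if_false]
        rcases hd with h' | h'
        · linarith
        · exact absurd (by linarith : x (γ j k).1 ≤ 1/4) h
  have hXj := hX j
  rw [Fin.sum_univ_three] at hXj
  linarith [hlit 0, hlit 1, hlit 2]
end

section
/- Converse direction of the objective-parametrized reduction: if the 3-SAT instance is satisfiable and x ∈ {0,1}^n encodes a satisfying assignment, then x ∈ X and (μ*, ν*, z*) = (x, 1 − x, 0) is the unique optimal solution of the LP: minimize −xᵀμ − (1−x)ᵀν − (n − 1/4)z subject to μ_i + ν_i + z ≤ 1, μ, ν, z ≥ 0. -/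
/-!
The objective `∑ᵢ (xᵢ μᵢ + (1 - xᵢ) νᵢ) + (n - 1/4) z` is maximised at `(x, 1 - x, 0)`: since `x` is
binary, each summand is a single one of `μᵢ, νᵢ`, hence at most `1 - z`, so the objective is at most
`n - z/4`. Equality forces `z = 0` and every summand to equal `1`, which pins `μᵢ = xᵢ`,
`νᵢ = 1 - xᵢ`. Feasibility of `x` in the clause polytope is immediate: a satisfied literal has
value `1` and all literal values lie in `[0, 1]`.
-/

open Finset

lemma mem_Icc_of_eq_zero_or_eq_one {t : ℝ} (ht : t = 0 ∨ t = 1) : t ∈ Set.Icc (0 : ℝ) 1 := by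
  rcases ht with rfl | rfl <;> norm_num

lemma litVal_nonneg {n : ℕ} {x : Fin n → ℝ} (hx : ∀ i, x i ∈ Set.Icc (0 : ℝ) 1)
    (l : Fin n × Bool) : 0 ≤ litVal x l := by
  unfold litVal
  split_ifs
  · exact (hx l.1).1
  · linarith [(hx l.1).2]

lemma litVal_eq_one {n : ℕ} {x : Fin n → ℝ} {l : Fin n × Bool}
    (hl : if l.2 then x l.1 = 1 else x l.1 = 0) : litVal x l = 1 := by
  unfold litVal
  split_ifs at hl ⊢ <;> simp [hl]

lemma one_le_sum_litVal {n : ℕ} {ι : Type*} [Fintype ι] {x : Fin n → ℝ}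
    (hx : ∀ i, x i ∈ Set.Icc (0 : ℝ) 1) (c : ι → Fin n × Bool)
    (hc : ∃ k, if (c k).2 then x (c k).1 = 1 else x (c k).1 = 0) :
    1 ≤ ∑ k, litVal x (c k) := by
  obtain ⟨k, hk⟩ := hc
  calc (1 : ℝ) = litVal x (c k) := (litVal_eq_one hk).symm
    _ ≤ ∑ k, litVal x (c k) :=
      single_le_sum (fun k _ => litVal_nonneg hx (c k)) (mem_univ k)

section Binary

variable {t μ ν z : ℝ}

lemma mul_add_one_sub_mul_le (ht : t = 0 ∨ t = 1) (hμ : 0 ≤ μ) (hν : 0 ≤ ν)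
    (h : μ + ν + z ≤ 1) : t * μ + (1 - t) * ν ≤ 1 - z := by
  rcases ht with rfl | rfl <;> linarith

lemma eq_of_mul_add_one_sub_mul_eq_one (ht : t = 0 ∨ t = 1) (hμ : 0 ≤ μ) (hν : 0 ≤ ν)
    (h : μ + ν ≤ 1) (heq : t * μ + (1 - t) * ν = 1) : μ = t ∧ ν = 1 - t := by
  rcases ht with rfl | rfl <;> constructor <;> linarith

end Binary

section Objective

variable {ι : Type*} [Fintype ι] {x : ι → ℝ}

lemma sum_mul_self_add_sum_one_sub_mul_self (hx : ∀ i, x i = 0 ∨ x i = 1) :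
    ∑ i, x i * x i + ∑ i, (1 - x i) * (1 - x i) = Fintype.card ι := by
  have h1 i : x i * x i + (1 - x i) * (1 - x i) = 1 := by rcases hx i with h | h <;> simp [h]
  simp [← sum_add_distrib, h1]

lemma sum_mul_add_sum_one_sub_mul_lt (hx : ∀ i, x i = 0 ∨ x i = 1) {μ ν : ι → ℝ} {z : ℝ}
    (h : ∀ i, μ i + ν i + z ≤ 1) (hμ : ∀ i, 0 ≤ μ i) (hν : ∀ i, 0 ≤ ν i) (hz : 0 ≤ z)
    (hne : (μ, ν, z) ≠ (x, fun i => 1 - x i, 0)) :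
    ∑ i, x i * μ i + ∑ i, (1 - x i) * ν i + (Fintype.card ι - 1 / 4) * z < Fintype.card ι := by
  set a : ι → ℝ := fun i => x i * μ i + (1 - x i) * ν i
  have ha : ∀ i, a i ≤ 1 - z := fun i => mul_add_one_sub_mul_le (hx i) (hμ i) (hν i) (h i)
  have hsum : ∑ i, a i ≤ Fintype.card ι * (1 - z) := by
    simpa [mul_sub] using sum_le_sum fun i (_ : i ∈ univ) => ha i
  rw [← sum_add_distrib]
  by_contra! hge
  have hz0 : z = 0 := by nlinarith
  subst hz0
  have hle : ∀ i ∈ univ, a i ≤ 1 := fun i _ => by simpa using ha i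
  have hall : ∀ i, a i = 1 := fun i =>
    (sum_eq_sum_iff_of_le hle).1 (le_antisymm (sum_le_sum hle) (by simpa using hge)) i (mem_univ i)
  have hopt : ∀ i, μ i = x i ∧ ν i = 1 - x i := fun i =>
    eq_of_mul_add_one_sub_mul_eq_one (hx i) (hμ i) (hν i) (by linarith [h i]) (hall i)
  exact hne (by simp only [Prod.mk.injEq, and_true]; exact ⟨funext fun i => (hopt i).1,
    funext fun i => (hopt i).2⟩)

end Objective

/-- Converse direction of the objective-parametrized 3-SAT reduction: if `x ∈ {0,1}^n`
encodes a satisfying assignment, then `x ∈ X` (all clause sums are ≥ 1) and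
`(μ*, ν*, z*) = (x, 1 − x, 0)` is the unique optimal solution of the LP
`min −xᵀμ − (1−x)ᵀν − (n − 1/4)z  s.t.  μᵢ + νᵢ + z ≤ 1, μ, ν, z ≥ 0`. -/
theorem stmt_16 {n m : ℕ} (γ : Fin m → Fin 3 → Fin n × Bool)
    (x : Fin n → ℝ) (hbin : ∀ i, x i = 0 ∨ x i = 1)
    (hsat : ∀ j : Fin m, ∃ k : Fin 3,
      if (γ j k).2 then x (γ j k).1 = 1 else x (γ j k).1 = 0) :
    ((∀ i, x i ∈ Set.Icc (0:ℝ) 1) ∧ ∀ j : Fin m, 1 ≤ ∑ k : Fin 3, litVal x (γ j k)) ∧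
    ((∀ i, x i + (1 - x i) + 0 ≤ 1) ∧ (∀ i, 0 ≤ x i) ∧ (∀ i, 0 ≤ 1 - x i) ∧ (0:ℝ) ≤ 0) ∧
    (∀ (μ ν : Fin n → ℝ) (z : ℝ),
      (∀ i, μ i + ν i + z ≤ 1) → (∀ i, 0 ≤ μ i) → (∀ i, 0 ≤ ν i) → 0 ≤ z →
      (μ, ν, z) ≠ (x, fun i => 1 - x i, (0:ℝ)) →
      -(∑ i, x i * x i) - (∑ i, (1 - x i) * (1 - x i)) - ((n : ℝ) - 1/4) * 0 <
        -(∑ i, x i * μ i) - (∑ i, (1 - x i) * ν i) - ((n : ℝ) - 1/4) * z) := by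
  have hx i : x i ∈ Set.Icc (0 : ℝ) 1 := mem_Icc_of_eq_zero_or_eq_one (hbin i)
  refine ⟨⟨hx, fun j => one_le_sum_litVal hx (γ j) (hsat j)⟩,
    ⟨fun i => by linarith, fun i => (hx i).1, fun i => by linarith [(hx i).2], le_rfl⟩, ?_⟩
  intro μ ν z h hμ hν hz hne
  have hval := sum_mul_self_add_sum_one_sub_mul_self hbin
  have hlt := sum_mul_add_sum_one_sub_mul_lt hbin h hμ hν hz hne
  rw [Fintype.card_fin] at hval hlt
  linarith
end
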